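/- arXiv:1712.09932 — 4 statements merged into one kernel-verified Lean document; each statement's English description precedes it below -/
import Mathlib

section
/- The stabilizer in $GL_2(\mathbb{C})$ of the binary cubic form $w_0^3 + w_1^3$ is the finite group consisting of the diagonal matrices $\mathrm{diag}(\xi_1,\xi_2)$ and antidiagonal matrices with entries $\xi_1, \xi_2$ where $\xi_1^3 = \xi_2^3 = 1$; in particular this stabilizer has order 18. -/
open MvPolynomial

/-- The action of `GL₂(ℂ)` on binary forms by linear substitution of the variables. -/
noncomputable def glAct (g : GL (Fin 2) ℂ) (f : MvPolynomial (Fin 2) ℂ) :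
    MvPolynomial (Fin 2) ℂ :=
  aeval (fun i => ∑ j, C ((g : Matrix (Fin 2) (Fin 2) ℂ) j i) * X j) f

/-- The binary cubic form `w₀³ + w₁³`. -/
noncomputable def fermatCubic : MvPolynomial (Fin 2) ℂ :=
  (X 0) ^ 3 + (X 1) ^ 3

/-!
Writing `g = !![a, b; c, d]`, the form `(a w₀ + c w₁)³ + (b w₀ + d w₁)³` equals `w₀³ + w₁³` iff
`a³ + b³ = c³ + d³ = 1` and the mixed coefficients `a²c + b²d` and `ac² + bd²` vanish. Eliminating
between the last two gives `abcd (ad - bc) = 0`, so as `g` is invertible one of `a, b, c, d` is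
zero, and then the mixed coefficients force `g` to be diagonal or antidiagonal, with entries cube
roots of unity. There are `2 · 3 · 3` such matrices.
-/

theorem antidiag_or_diag_eq_zero_of_mixed_cubic_coeffs {R : Type*} [CommRing R] [IsDomain R]
    {a b c d : R} (hp : a ^ 2 * c + b ^ 2 * d = 0) (hq : a * c ^ 2 + b * d ^ 2 = 0)
    (hdet : a * d - b * c ≠ 0) : b = 0 ∧ c = 0 ∨ a = 0 ∧ d = 0 := by
  have habcd : a * b * c * d = 0 := by
    refine (mul_eq_zero.mp ?_).resolve_right hdet
    linear_combination a ^ 2 * c * hq - a * c ^ 2 * hp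
  rcases mul_eq_zero.mp habcd with habc | rfl
  · rcases mul_eq_zero.mp habc with hab | rfl
    · rcases mul_eq_zero.mp hab with rfl | rfl
      · refine .inr ⟨rfl, ?_⟩
        have hb : b ≠ 0 := by rintro rfl; simp at hdet
        simpa [hb] using hp
      · refine .inl ⟨rfl, ?_⟩
        have ha : a ≠ 0 := by rintro rfl; simp at hdet
        simpa [ha] using hp
    · refine .inl ⟨?_, rfl⟩
      have hd : d ≠ 0 := by rintro rfl; simp at hdet
      simpa [hd] using hp
  · refine .inr ⟨?_, rfl⟩
    have hc : c ≠ 0 := by rintro rfl; simp at hdet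
    simpa [hc] using hp

theorem forall_sum_cubes_eq_iff {K : Type*} [Field K] [CharZero K] {a b c d : K}
    (hdet : a * d - b * c ≠ 0) :
    (∀ x y : K, (a * x + c * y) ^ 3 + (b * x + d * y) ^ 3 = x ^ 3 + y ^ 3) ↔
      b = 0 ∧ c = 0 ∧ a ^ 3 = 1 ∧ d ^ 3 = 1 ∨ a = 0 ∧ d = 0 ∧ b ^ 3 = 1 ∧ c ^ 3 = 1 := by
  constructor
  · intro h
    have h₁₀ := h 1 0
    have h₀₁ := h 0 1
    have h₁₁ := h 1 1
    have h₁n := h 1 (-1)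
    have hp : a ^ 2 * c + b ^ 2 * d = 0 := by
      linear_combination (h₁₁ - h₁n) / 6 - h₀₁ / 3
    have hq : a * c ^ 2 + b * d ^ 2 = 0 := by
      linear_combination (h₁₁ + h₁n) / 6 - h₁₀ / 3
    rcases antidiag_or_diag_eq_zero_of_mixed_cubic_coeffs hp hq hdet with ⟨rfl, rfl⟩ | ⟨rfl, rfl⟩
    · exact .inl ⟨rfl, rfl, by simpa using h₁₀, by simpa using h₀₁⟩
    · exact .inr ⟨rfl, rfl, by simpa using h₁₀, by simpa using h₀₁⟩
  · rintro (⟨rfl, rfl, ha, hd⟩ | ⟨rfl, rfl, hb, hc⟩) x y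
    · linear_combination x ^ 3 * ha + y ^ 3 * hd
    · linear_combination x ^ 3 * hb + y ^ 3 * hc

section
variable {K : Type*} [Field K]

def diagOrAntidiag (s : Bool) (ξ₁ ξ₂ : K) : Matrix (Fin 2) (Fin 2) K :=
  if s then !![0, ξ₁; ξ₂, 0] else !![ξ₁, 0; 0, ξ₂]

theorem det_diagOrAntidiag_ne_zero (s : Bool) {ξ₁ ξ₂ : K} (h₁ : ξ₁ ≠ 0) (h₂ : ξ₂ ≠ 0) :
    (diagOrAntidiag s ξ₁ ξ₂).det ≠ 0 := by
  cases s <;> simp [diagOrAntidiag, Matrix.det_fin_two_of, h₁, h₂]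

noncomputable def diagOrAntidiagGL (p : Bool × Kˣ × Kˣ) : GL (Fin 2) K :=
  Matrix.GeneralLinearGroup.mkOfDetNeZero (diagOrAntidiag p.1 p.2.1 p.2.2)
    (det_diagOrAntidiag_ne_zero p.1 p.2.1.ne_zero p.2.2.ne_zero)

theorem coe_diagOrAntidiagGL (p : Bool × Kˣ × Kˣ) :
    (diagOrAntidiagGL p : Matrix (Fin 2) (Fin 2) K) = diagOrAntidiag p.1 (p.2.1 : K) p.2.2 :=
  rfl

theorem diagOrAntidiagGL_injective : Function.Injective (diagOrAntidiagGL (K := K)) := by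
  rintro ⟨s, ξ₁, ξ₂⟩ ⟨t, η₁, η₂⟩ h
  have h := congrArg (fun g : GL (Fin 2) K => (g : Matrix (Fin 2) (Fin 2) K)) h
  simp only [coe_diagOrAntidiagGL, ← Matrix.ext_iff, Fin.forall_fin_two] at h
  cases s <;> cases t <;> simp_all [diagOrAntidiag, Units.ext_iff]
end

open Matrix in
theorem eval_glAct (g : GL (Fin 2) ℂ) (f : MvPolynomial (Fin 2) ℂ) (x : Fin 2 → ℂ) :
    eval x (glAct g f) = eval (x ᵥ* (g : Matrix (Fin 2) (Fin 2) ℂ)) f := by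
  rw [glAct, aeval_eq_bind₁, eval, eval₂Hom_bind₁]
  congr
  funext i
  simp [vecMul, dotProduct, mul_comm]

theorem glAct_fermatCubic_eq_iff_forall (g : GL (Fin 2) ℂ) :
    glAct g fermatCubic = fermatCubic ↔ ∀ x y : ℂ,
      (g 0 0 * x + g 1 0 * y) ^ 3 + (g 0 1 * x + g 1 1 * y) ^ 3 = x ^ 3 + y ^ 3 := by
  rw [MvPolynomial.funext_iff, ← FinVec.forall_iff]
  simp [FinVec.Forall, eval_glAct, fermatCubic, Matrix.vecMul, dotProduct, mul_comm]

theorem glAct_fermatCubic_eq_iff (g : GL (Fin 2) ℂ) :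
    glAct g fermatCubic = fermatCubic ↔ ∃ ξ₁ ξ₂ : ℂ, ξ₁ ^ 3 = 1 ∧ ξ₂ ^ 3 = 1 ∧
      ∃ s, (g : Matrix (Fin 2) (Fin 2) ℂ) = diagOrAntidiag s ξ₁ ξ₂ := by
  have hdet : g 0 0 * g 1 1 - g 0 1 * g 1 0 ≠ 0 := by
    simpa [Matrix.det_fin_two] using g.det_ne_zero
  rw [glAct_fermatCubic_eq_iff_forall, forall_sum_cubes_eq_iff hdet]
  constructor
  · rintro (⟨hb, hc, ha, hd⟩ | ⟨ha, hd, hb, hc⟩)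
    · exact ⟨_, _, ha, hd, false, by
        rw [Matrix.eta_fin_two (g : Matrix (Fin 2) (Fin 2) ℂ)]; simp [diagOrAntidiag, hb, hc]⟩
    · exact ⟨_, _, hb, hc, true, by
        rw [Matrix.eta_fin_two (g : Matrix (Fin 2) (Fin 2) ℂ)]; simp [diagOrAntidiag, ha, hd]⟩
  · rintro ⟨ξ₁, ξ₂, h₁, h₂, s, hg⟩
    cases s <;> simp [hg, diagOrAntidiag, h₁, h₂]

theorem setOf_glAct_fermatCubic_eq_range :
    {g : GL (Fin 2) ℂ | glAct g fermatCubic = fermatCubic} =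
      Set.range (diagOrAntidiagGL ∘ Prod.map id (Prod.map (↑) (↑)) :
        Bool × rootsOfUnity 3 ℂ × rootsOfUnity 3 ℂ → GL (Fin 2) ℂ) := by
  ext g
  simp only [Set.mem_ofPred_eq, glAct_fermatCubic_eq_iff, Set.mem_range, Prod.exists,
    Function.comp_apply, Prod.map_apply, id_eq]
  constructor
  · rintro ⟨ξ₁, ξ₂, h₁, h₂, s, hg⟩
    exact ⟨s, rootsOfUnity.mkOfPowEq ξ₁ h₁, rootsOfUnity.mkOfPowEq ξ₂ h₂,
      Units.ext (by rw [coe_diagOrAntidiagGL, hg]; rfl)⟩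
  · rintro ⟨s, ζ₁, ζ₂, rfl⟩
    exact ⟨_, _, (mem_rootsOfUnity' 3 _).mp ζ₁.2, (mem_rootsOfUnity' 3 _).mp ζ₂.2, s, rfl⟩

/-- The stabilizer in `GL₂(ℂ)` of the binary cubic form `w₀³ + w₁³` consists exactly of
the diagonal matrices `diag(ξ₁, ξ₂)` and the antidiagonal matrices with entries `ξ₁, ξ₂`,
where `ξ₁³ = ξ₂³ = 1`; in particular, the stabilizer has order `18`. -/
theorem stabilizer_fermat_cubic :
    (∀ g : GL (Fin 2) ℂ,
      glAct g fermatCubic = fermatCubic ↔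
        ∃ ξ₁ ξ₂ : ℂ, ξ₁ ^ 3 = 1 ∧ ξ₂ ^ 3 = 1 ∧
          ((g : Matrix (Fin 2) (Fin 2) ℂ) = !![ξ₁, 0; 0, ξ₂] ∨
           (g : Matrix (Fin 2) (Fin 2) ℂ) = !![0, ξ₁; ξ₂, 0])) ∧
    Nat.card {g : GL (Fin 2) ℂ | glAct g fermatCubic = fermatCubic} = 18 := by
  refine ⟨fun g => (glAct_fermatCubic_eq_iff g).trans ?_, ?_⟩
  · simp [diagOrAntidiag, Bool.exists_bool]
  · rw [setOf_glAct_fermatCubic_eq_range, Nat.card_range_of_injective <|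
      diagOrAntidiagGL_injective.comp <|
        Function.injective_id.prodMap (Subtype.val_injective.prodMap Subtype.val_injective)]
    rw [Nat.card_prod, Nat.card_prod, Nat.card_eq_fintype_card (α := Bool), Fintype.card_bool,
      Complex.card_rootsOfUnity]
end

section
/- A binary cubic form $f = x_0 w_0^3 + 3x_1 w_0^2 w_1 + 3x_2 w_0 w_1^2 + x_3 w_1^3$ with complex coefficients is a cube of a linear form (or zero) if and only if all $2\times 2$ minors of the matrix $\begin{bmatrix} x_0 & x_1 & x_2 \\ x_1 & x_2 & x_3 \end{bmatrix}$ vanish, i.e. $x_0 x_2 = x_1^2$, $x_1 x_3 = x_2^2$, and $x_0 x_3 = x_1 x_2$. -/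
/-!
Expanding `(a w₀ + b w₁)³` shows that the form is a cube exactly when
`(x₀, x₁, x₂, x₃) = (a³, a²b, ab², b³)` for some `a, b`, i.e. when the coefficient vector lies on
the twisted cubic; the coefficients can be compared after setting `w₀ = 1`, since `3 ≠ 0`.
The minors vanish at such points, and conversely, if they vanish, take `a = ∛x₀` and
`b = x₁ / a²` (or `a = 0`, `b = ∛x₃` when `x₀ = 0`, which forces `x₁ = x₂ = 0`).
-/

open MvPolynomial

section BinaryCubic

variable {R : Type*} [CommRing R]

noncomputable def binaryCubic (x₀ x₁ x₂ x₃ : R) : MvPolynomial (Fin 2) R :=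
  C x₀ * X 0 ^ 3 + C (3 * x₁) * X 0 ^ 2 * X 1 + C (3 * x₂) * X 0 * X 1 ^ 2 + C x₃ * X 1 ^ 3

theorem linear_pow_three_eq_binaryCubic (a b : R) :
    (C a * X 0 + C b * X 1) ^ 3 = binaryCubic (a ^ 3) (a ^ 2 * b) (a * b ^ 2) (b ^ 3) := by
  simp only [binaryCubic, map_mul, map_pow, map_ofNat]
  ring

theorem aeval_binaryCubic (x₀ x₁ x₂ x₃ : R) :
    aeval ![1, Polynomial.X] (binaryCubic x₀ x₁ x₂ x₃) =
      Polynomial.C x₀ + Polynomial.C (3 * x₁) * Polynomial.X +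
        Polynomial.C (3 * x₂) * Polynomial.X ^ 2 + Polynomial.C x₃ * Polynomial.X ^ 3 := by
  simp only [binaryCubic, map_add, map_mul, map_pow, aeval_C, aeval_X, Polynomial.algebraMap_eq]
  simp

theorem binaryCubic_inj [IsDomain R] (h3 : (3 : R) ≠ 0) {x₀ x₁ x₂ x₃ y₀ y₁ y₂ y₃ : R} :
    binaryCubic x₀ x₁ x₂ x₃ = binaryCubic y₀ y₁ y₂ y₃ ↔
      x₀ = y₀ ∧ x₁ = y₁ ∧ x₂ = y₂ ∧ x₃ = y₃ := by
  refine ⟨fun h => ?_, by rintro ⟨rfl, rfl, rfl, rfl⟩; rfl⟩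
  have h' := congrArg (aeval ![(1 : Polynomial R), Polynomial.X]) h
  rw [aeval_binaryCubic, aeval_binaryCubic] at h'
  have h0 := congrArg (Polynomial.coeff · 0) h'
  have h1 := congrArg (Polynomial.coeff · 1) h'
  have h2 := congrArg (Polynomial.coeff · 2) h'
  have h3' := congrArg (Polynomial.coeff · 3) h'
  simp only [Polynomial.coeff_add, Polynomial.coeff_C, Polynomial.coeff_C_mul_X,
    Polynomial.coeff_C_mul_X_pow] at h0 h1 h2 h3'
  norm_num [h3] at h0 h1 h2 h3'
  exact ⟨h0, h1, h2, h3'⟩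

end BinaryCubic

theorem exists_twisted_cubic_iff_minors_eq {K : Type*} [Field K] [IsAlgClosed K]
    (x₀ x₁ x₂ x₃ : K) :
    (∃ a b : K, x₀ = a ^ 3 ∧ x₁ = a ^ 2 * b ∧ x₂ = a * b ^ 2 ∧ x₃ = b ^ 3) ↔
      (x₀ * x₂ = x₁ ^ 2 ∧ x₁ * x₃ = x₂ ^ 2 ∧ x₀ * x₃ = x₁ * x₂) := by
  constructor
  · rintro ⟨a, b, rfl, rfl, rfl, rfl⟩
    exact ⟨by ring, by ring, by ring⟩
  rintro ⟨m₁, m₂, m₃⟩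
  by_cases hx₀ : x₀ = 0
  · have hx₁ : x₁ = 0 := pow_eq_zero_iff two_ne_zero |>.mp (by rw [← m₁, hx₀, zero_mul])
    have hx₂ : x₂ = 0 := pow_eq_zero_iff two_ne_zero |>.mp (by rw [← m₂, hx₁, zero_mul])
    obtain ⟨b, hb⟩ := IsAlgClosed.exists_pow_nat_eq x₃ three_pos
    exact ⟨0, b, by simp [hx₀], by simp [hx₁], by simp [hx₂], hb.symm⟩
  · obtain ⟨a, ha⟩ := IsAlgClosed.exists_pow_nat_eq x₀ three_pos
    have ha₀ : a ≠ 0 := by rintro rfl; exact hx₀ (by rw [← ha]; ring)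
    refine ⟨a, x₁ / a ^ 2, ha.symm, ?_, ?_, ?_⟩
    · field_simp
    · field_simp
      linear_combination m₁ + x₂ * ha
    · field_simp
      linear_combination x₁ * m₁ + a ^ 3 * m₃ + (x₃ * a ^ 3 + x₁ * x₂) * ha

/-- A binary cubic form `f = x₀ w₀³ + 3 x₁ w₀² w₁ + 3 x₂ w₀ w₁² + x₃ w₁³` is the cube of
a linear form (or zero) if and only if all `2 × 2` minors of the catalecticant matrix
`[[x₀, x₁, x₂], [x₁, x₂, x₃]]` vanish. -/
theorem cube_of_linear_iff_minors_vanish (x₀ x₁ x₂ x₃ : ℂ) :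
    (∃ a b : ℂ,
      (C x₀ * X 0 ^ 3 + C (3 * x₁) * X 0 ^ 2 * X 1 + C (3 * x₂) * X 0 * X 1 ^ 2 +
          C x₃ * X 1 ^ 3 : MvPolynomial (Fin 2) ℂ) =
        (C a * X 0 + C b * X 1) ^ 3) ↔
      (x₀ * x₂ = x₁ ^ 2 ∧ x₁ * x₃ = x₂ ^ 2 ∧ x₀ * x₃ = x₁ * x₂) := by
  change (∃ a b : ℂ, binaryCubic x₀ x₁ x₂ x₃ = _) ↔ _
  simp only [linear_pow_three_eq_binaryCubic, binaryCubic_inj three_ne_zero]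
  exact exists_twisted_cubic_iff_minors_eq x₀ x₁ x₂ x₃
end

section
/- For each $n > 0$ and each $\lambda \in \mathbb{C}$, the representation $R_n(\lambda)$ of the quiver $\hat{D}_4$ (four source vertices $1,2,3,4$ each with one arrow into a central sink $5$) given by $V_1 = V_2 = V_3 = V_4 = \mathbb{C}^n$, $V_5 = \mathbb{C}^{2n}$, with the four maps $\begin{bmatrix} I_n \\ 0 \end{bmatrix}$, $\begin{bmatrix} 0 \\ I_n \end{bmatrix}$, $\begin{bmatrix} I_n \\ I_n \end{bmatrix}$, $\begin{bmatrix} I_n \\ J_n(\lambda) \end{bmatrix}$, is an indecomposable representation. -/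
/-- A finite-dimensional complex representation of the extended Dynkin quiver `D̂₄`:
four source vertices `1, 2, 3, 4`, each with one arrow into the central sink `5`. -/
structure D4HatRep where
  V1 : Type
  V2 : Type
  V3 : Type
  V4 : Type
  V5 : Type
  [add1 : AddCommGroup V1]
  [add2 : AddCommGroup V2]
  [add3 : AddCommGroup V3]
  [add4 : AddCommGroup V4]
  [add5 : AddCommGroup V5]
  [mod1 : Module ℂ V1]
  [mod2 : Module ℂ V2]
  [mod3 : Module ℂ V3]
  [mod4 : Module ℂ V4]
  [mod5 : Module ℂ V5]
  [fd1 : FiniteDimensional ℂ V1]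
  [fd2 : FiniteDimensional ℂ V2]
  [fd3 : FiniteDimensional ℂ V3]
  [fd4 : FiniteDimensional ℂ V4]
  [fd5 : FiniteDimensional ℂ V5]
  f1 : V1 →ₗ[ℂ] V5
  f2 : V2 →ₗ[ℂ] V5
  f3 : V3 →ₗ[ℂ] V5
  f4 : V4 →ₗ[ℂ] V5

attribute [instance] D4HatRep.add1 D4HatRep.add2 D4HatRep.add3 D4HatRep.add4 D4HatRep.add5
attribute [instance] D4HatRep.mod1 D4HatRep.mod2 D4HatRep.mod3 D4HatRep.mod4 D4HatRep.mod5
attribute [instance] D4HatRep.fd1 D4HatRep.fd2 D4HatRep.fd3 D4HatRep.fd4 D4HatRep.fd5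

/-- An isomorphism of representations of `D̂₄`: a family of linear isomorphisms at each
vertex commuting with the structure maps. -/
structure D4HatRepIso (M N : D4HatRep) where
  e1 : M.V1 ≃ₗ[ℂ] N.V1
  e2 : M.V2 ≃ₗ[ℂ] N.V2
  e3 : M.V3 ≃ₗ[ℂ] N.V3
  e4 : M.V4 ≃ₗ[ℂ] N.V4
  e5 : M.V5 ≃ₗ[ℂ] N.V5
  comm1 : ∀ v, e5 (M.f1 v) = N.f1 (e1 v)
  comm2 : ∀ v, e5 (M.f2 v) = N.f2 (e2 v)
  comm3 : ∀ v, e5 (M.f3 v) = N.f3 (e3 v)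
  comm4 : ∀ v, e5 (M.f4 v) = N.f4 (e4 v)

/-- Direct sum of two representations of `D̂₄`. -/
noncomputable def D4HatRep.sum (M N : D4HatRep) : D4HatRep where
  V1 := M.V1 × N.V1
  V2 := M.V2 × N.V2
  V3 := M.V3 × N.V3
  V4 := M.V4 × N.V4
  V5 := M.V5 × N.V5
  f1 := M.f1.prodMap N.f1
  f2 := M.f2.prodMap N.f2
  f3 := M.f3.prodMap N.f3
  f4 := M.f4.prodMap N.f4

/-- The zero representation. -/
def D4HatRep.IsZero (M : D4HatRep) : Prop :=
  Subsingleton M.V1 ∧ Subsingleton M.V2 ∧ Subsingleton M.V3 ∧ Subsingleton M.V4 ∧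
    Subsingleton M.V5

/-- A representation is indecomposable if it is nonzero and not isomorphic to a direct
sum of two nonzero representations. -/
def D4HatRep.Indecomposable (M : D4HatRep) : Prop :=
  ¬ M.IsZero ∧
    ∀ N P : D4HatRep, Nonempty (D4HatRepIso M (N.sum P)) → N.IsZero ∨ P.IsZero

/-- The `n × n` Jordan block with eigenvalue `lam`, as a linear map `ℂⁿ → ℂⁿ`. -/
noncomputable def jordan (n : ℕ) (lam : ℂ) : (Fin n → ℂ) →ₗ[ℂ] (Fin n → ℂ) :=
  Matrix.toLin'
    (Matrix.of fun i j : Fin n =>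
      if i = j then lam else if (j : ℕ) = (i : ℕ) + 1 then 1 else 0)

/-- The representation `R_n(λ)` of `D̂₄`: `ℂⁿ` at the four source vertices, `ℂ²ⁿ` at the
sink, with structure maps `[I; 0]`, `[0; I]`, `[I; I]` and `[I; J_n(λ)]`. -/
noncomputable def R (n : ℕ) (lam : ℂ) : D4HatRep where
  V1 := Fin n → ℂ
  V2 := Fin n → ℂ
  V3 := Fin n → ℂ
  V4 := Fin n → ℂ
  V5 := (Fin n → ℂ) × (Fin n → ℂ)
  f1 := LinearMap.prod LinearMap.id 0
  f2 := LinearMap.prod 0 LinearMap.id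
  f3 := LinearMap.prod LinearMap.id LinearMap.id
  f4 := LinearMap.prod LinearMap.id (jordan n lam)

/-!
An endomorphism of `R n lam` respecting the four subspaces `ℂⁿ × 0`, `0 × ℂⁿ`, the diagonal and
the graph of `J = J_n(λ)` is `ψ` at the four sources and `ψ × ψ` at the sink, for a single `ψ`
commuting with `J`, hence with the nilpotent shift `J - λ`, whose kernel is a line. If `ψ` is an
idempotent other than `0` and `1`, then `ker ψ` and `ker (1 - ψ)` are nonzero and stable under the
shift, so both contain a nonzero vector of that line, which is absurd. A decomposition
`R n lam ≅ A ⊕ B` pulls the projection onto `A` back to such an idempotent, so it is `0` or `1`,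
and accordingly `A` or `B` is zero.
-/

theorem Module.End.exists_ne_zero_mem_ker_of_commute_of_isNilpotent {R M : Type*} [Semiring R]
    [AddCommMonoid M] [Module R M] {A N : Module.End R M} (hN : IsNilpotent N) (hAN : Commute A N)
    {w : M} (hw : w ≠ 0) (hAw : A w = 0) :
    ∃ v ≠ 0, A v = 0 ∧ N v = 0 := by
  classical
  have hex : ∃ k, (N ^ k) w = 0 := by
    obtain ⟨k, hk⟩ := hN
    exact ⟨k, by rw [hk, LinearMap.zero_apply]⟩
  -- `(N ^ m) w` is the last nonzero vector of the orbit `w, N w, N ^ 2 w, …`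
  obtain ⟨m, hm⟩ : ∃ m, Nat.find hex = m + 1 :=
    Nat.exists_eq_succ_of_ne_zero fun h => hw (by simpa [h] using Nat.find_spec hex)
  refine ⟨(N ^ m) w, Nat.find_min hex (by omega), ?_, ?_⟩
  · rw [← Module.End.mul_apply, (hAN.pow_right m).eq, Module.End.mul_apply, hAw, map_zero]
  · rw [← Module.End.mul_apply, ← pow_succ', ← hm]
    exact Nat.find_spec hex

theorem IsIdempotentElem.eq_zero_or_eq_one_of_commute_of_isNilpotent {K V : Type*} [Field K]
    [AddCommGroup V] [Module K V] {A N : Module.End K V} (hA : IsIdempotentElem A)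
    (hN : IsNilpotent N) (hAN : Commute A N) {v₀ : V} (hker : LinearMap.ker N ≤ K ∙ v₀) :
    A = 0 ∨ A = 1 := by
  by_contra! ⟨hA0, hA1⟩
  obtain ⟨v₁, hv₁, hAv₁, hNv₁⟩ : ∃ v ≠ 0, A v = 0 ∧ N v = 0 := by
    obtain ⟨w, hw⟩ : ∃ w, A w ≠ w := by
      by_contra! h
      exact hA1 (LinearMap.ext h)
    refine Module.End.exists_ne_zero_mem_ker_of_commute_of_isNilpotent hN hAN
      (sub_ne_zero.mpr hw) ?_
    rw [map_sub, ← Module.End.mul_apply, hA.eq, sub_self]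
  obtain ⟨v₂, hv₂, hAv₂, hNv₂⟩ : ∃ v ≠ 0, (1 - A) v = 0 ∧ N v = 0 := by
    obtain ⟨w, hw⟩ : ∃ w, A w ≠ 0 := by
      by_contra! h
      exact hA0 (LinearMap.ext h)
    refine Module.End.exists_ne_zero_mem_ker_of_commute_of_isNilpotent hN
      ((Commute.one_left N).sub_left hAN) hw ?_
    rw [← Module.End.mul_apply, hA.one_sub_mul_self, LinearMap.zero_apply]
  obtain ⟨a, rfl⟩ := Submodule.mem_span_singleton.mp (hker hNv₁)
  obtain ⟨b, rfl⟩ := Submodule.mem_span_singleton.mp (hker hNv₂)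
  have hAv₀ : A v₀ = 0 := by
    rw [map_smul] at hAv₁
    exact (smul_eq_zero.mp hAv₁).resolve_left (left_ne_zero_of_smul hv₁)
  rw [LinearMap.sub_apply, Module.End.one_apply, sub_eq_zero] at hAv₂
  rw [hAv₂, map_smul, hAv₀, smul_zero] at hv₂
  exact hv₂ rfl

section Jordan

variable {n : ℕ} {lam : ℂ}

theorem jordan_sub_smul_apply (x : Fin n → ℂ) (i : Fin n) :
    (jordan n lam - lam • 1) x i = if h : (i : ℕ) + 1 < n then x ⟨i + 1, h⟩ else 0 := by
  have hsplit : ∀ j : Fin n, (if i = j then lam * x j else if (j : ℕ) = i + 1 then x j else 0)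
      = (if i = j then lam * x j else 0) + (if (j : ℕ) = i + 1 then x j else 0) := by
    intro j
    by_cases hij : i = j <;> simp [hij]
  simp only [jordan, Matrix.toLin'_apply, Matrix.mulVec, dotProduct, Matrix.of_apply, ite_mul,
    one_mul, zero_mul, LinearMap.sub_apply, LinearMap.smul_apply, Module.End.one_apply,
    Pi.sub_apply, Pi.smul_apply, smul_eq_mul, hsplit, Finset.sum_add_distrib,
    Finset.sum_ite_eq, Finset.mem_univ, if_true, add_sub_cancel_left]
  split_ifs with h
  · rw [Finset.sum_eq_single_of_mem ⟨i + 1, h⟩ (Finset.mem_univ _)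
      fun j _ hj => if_neg fun hc => hj (Fin.ext hc)]
    simp
  · exact Finset.sum_eq_zero fun j _ => if_neg fun hc : (j : ℕ) = i + 1 => h (hc ▸ j.isLt)

theorem jordan_sub_smul_pow_apply (k : ℕ) (x : Fin n → ℂ) (i : Fin n) :
    ((jordan n lam - lam • 1) ^ k) x i = if h : (i : ℕ) + k < n then x ⟨i + k, h⟩ else 0 := by
  induction k generalizing x i with
  | zero => simp
  | succ k ih =>
    simp only [pow_succ, Module.End.mul_apply, ih, jordan_sub_smul_apply]
    split_ifs <;> first | rfl | omega

theorem isNilpotent_jordan_sub_smul (n : ℕ) (lam : ℂ) : IsNilpotent (jordan n lam - lam • 1) :=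
  ⟨n, by ext x i; simp [jordan_sub_smul_pow_apply]⟩

theorem ker_jordan_sub_smul_le_span (hn : 0 < n) (lam : ℂ) :
    LinearMap.ker (jordan n lam - lam • 1) ≤ ℂ ∙ Pi.single ⟨0, hn⟩ 1 := by
  intro v hv
  refine Submodule.mem_span_singleton.mpr ⟨v ⟨0, hn⟩, funext fun j => ?_⟩
  obtain ⟨_ | m, hj⟩ := j
  · simp
  · have := congrFun (LinearMap.mem_ker.mp hv) ⟨m, by omega⟩
    simp only [jordan_sub_smul_apply, hj, ↓reduceDIte, Pi.zero_apply] at this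
    simp [this]

end Jordan

theorem Module.End.eq_prodMap_and_commute_of_intertwines {K V : Type*} [Semiring K]
    [AddCommMonoid V] [Module K V] {J ψ₁ ψ₂ ψ₃ ψ₄ : Module.End K V} {ψ₅ : Module.End K (V × V)}
    (h₁ : ∀ x, ψ₅ (x, 0) = (ψ₁ x, 0)) (h₂ : ∀ y, ψ₅ (0, y) = (0, ψ₂ y))
    (h₃ : ∀ x, ψ₅ (x, x) = (ψ₃ x, ψ₃ x)) (h₄ : ∀ x, ψ₅ (x, J x) = (ψ₄ x, J (ψ₄ x))) :
    ψ₂ = ψ₁ ∧ ψ₃ = ψ₁ ∧ ψ₄ = ψ₁ ∧ ψ₅ = ψ₁.prodMap ψ₁ ∧ Commute ψ₁ J := by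
  have h₅ : ∀ x y, ψ₅ (x, y) = (ψ₁ x, ψ₂ y) := fun x y => by
    simpa [h₁, h₂] using map_add ψ₅ (x, 0) (0, y)
  have h₃' : ∀ x, (ψ₁ x, ψ₂ x) = (ψ₃ x, ψ₃ x) := fun x => (h₅ x x).symm.trans (h₃ x)
  have h₄' : ∀ x, (ψ₁ x, ψ₂ (J x)) = (ψ₄ x, J (ψ₄ x)) := fun x => (h₅ x _).symm.trans (h₄ x)
  have h₂₁ : ψ₂ = ψ₁ := LinearMap.ext fun x =>
    (Prod.ext_iff.mp (h₃' x)).2.trans (Prod.ext_iff.mp (h₃' x)).1.symm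
  have h₄₁ : ψ₄ = ψ₁ := LinearMap.ext fun x => (Prod.ext_iff.mp (h₄' x)).1.symm
  refine ⟨h₂₁, LinearMap.ext fun x => (Prod.ext_iff.mp (h₃' x)).1.symm, h₄₁,
    LinearMap.ext fun ⟨x, y⟩ => by rw [h₅, LinearMap.prodMap_apply, h₂₁], LinearMap.ext fun x => ?_⟩
  have hJ := (Prod.ext_iff.mp (h₄' x)).2
  rwa [h₂₁, h₄₁] at hJ

theorem LinearEquiv.symm_conjRingEquiv_comm {R A B C D : Type*} [Semiring R]
    [AddCommMonoid A] [AddCommMonoid B] [AddCommMonoid C] [AddCommMonoid D]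
    [Module R A] [Module R B] [Module R C] [Module R D]
    (e : A ≃ₗ[R] B) (e' : C ≃ₗ[R] D) {f : A →ₗ[R] C} {f' : B →ₗ[R] D}
    (hf : ∀ v, e' (f v) = f' (e v)) {p : Module.End R B} {q : Module.End R D}
    (hpq : ∀ v, q (f' v) = f' (p v)) (v : A) :
    e'.symm.conjRingEquiv q (f v) = f (e.symm.conjRingEquiv p v) := by
  simp only [LinearEquiv.conjRingEquiv_apply_apply, LinearEquiv.symm_symm]
  rw [e'.symm_apply_eq, hf, hf, hpq, LinearEquiv.apply_symm_apply]

section ProdMap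

variable {R V X Y : Type*} [Semiring R] [AddCommMonoid V] [AddCommMonoid X]
  [AddCommMonoid Y] [Module R V] [Module R X] [Module R Y]

theorem LinearMap.isIdempotentElem_prodMap_id_zero :
    IsIdempotentElem (LinearMap.prodMap (LinearMap.id : Module.End R X) (0 : Module.End R Y)) :=
  LinearMap.ext fun _ => rfl

theorem LinearEquiv.subsingleton_fst_of_symm_conjRingEquiv_eq_zero (e : V ≃ₗ[R] X × Y)
    (h : e.symm.conjRingEquiv (LinearMap.prodMap LinearMap.id 0) = 0) : Subsingleton X := by
  rw [RingEquiv.map_eq_zero_iff] at h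
  exact subsingleton_of_forall_eq 0 fun x => congrArg Prod.fst (LinearMap.congr_fun h (x, 0))

theorem LinearEquiv.subsingleton_snd_of_symm_conjRingEquiv_eq_one (e : V ≃ₗ[R] X × Y)
    (h : e.symm.conjRingEquiv (LinearMap.prodMap LinearMap.id 0) = 1) : Subsingleton Y := by
  rw [RingEquiv.map_eq_one_iff] at h
  exact subsingleton_of_forall_eq 0 fun y =>
    (congrArg Prod.snd (LinearMap.congr_fun h (0, y))).symm

end ProdMap

structure D4HatRepEnd (M : D4HatRep) where
  g1 : Module.End ℂ M.V1
  g2 : Module.End ℂ M.V2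
  g3 : Module.End ℂ M.V3
  g4 : Module.End ℂ M.V4
  g5 : Module.End ℂ M.V5
  comm1 : ∀ v, g5 (M.f1 v) = M.f1 (g1 v)
  comm2 : ∀ v, g5 (M.f2 v) = M.f2 (g2 v)
  comm3 : ∀ v, g5 (M.f3 v) = M.f3 (g3 v)
  comm4 : ∀ v, g5 (M.f4 v) = M.f4 (g4 v)

attribute [ext] D4HatRepEnd

namespace D4HatRepEnd

variable {M : D4HatRep}

instance : Zero (D4HatRepEnd M) :=
  ⟨⟨0, 0, 0, 0, 0, fun _ => by simp, fun _ => by simp, fun _ => by simp, fun _ => by simp⟩⟩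

instance : One (D4HatRepEnd M) :=
  ⟨⟨1, 1, 1, 1, 1, fun _ => rfl, fun _ => rfl, fun _ => rfl, fun _ => rfl⟩⟩

noncomputable def projFst (N P : D4HatRep) : D4HatRepEnd (N.sum P) where
  g1 := LinearMap.prodMap LinearMap.id 0
  g2 := LinearMap.prodMap LinearMap.id 0
  g3 := LinearMap.prodMap LinearMap.id 0
  g4 := LinearMap.prodMap LinearMap.id 0
  g5 := LinearMap.prodMap LinearMap.id 0
  comm1 _ := Prod.ext rfl (map_zero P.f1).symm
  comm2 _ := Prod.ext rfl (map_zero P.f2).symm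
  comm3 _ := Prod.ext rfl (map_zero P.f3).symm
  comm4 _ := Prod.ext rfl (map_zero P.f4).symm

end D4HatRepEnd

noncomputable def D4HatRepIso.pullback {M N : D4HatRep} (φ : D4HatRepIso M N)
    (g : D4HatRepEnd N) : D4HatRepEnd M where
  g1 := φ.e1.symm.conjRingEquiv g.g1
  g2 := φ.e2.symm.conjRingEquiv g.g2
  g3 := φ.e3.symm.conjRingEquiv g.g3
  g4 := φ.e4.symm.conjRingEquiv g.g4
  g5 := φ.e5.symm.conjRingEquiv g.g5
  comm1 := LinearEquiv.symm_conjRingEquiv_comm _ _ φ.comm1 g.comm1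
  comm2 := LinearEquiv.symm_conjRingEquiv_comm _ _ φ.comm2 g.comm2
  comm3 := LinearEquiv.symm_conjRingEquiv_comm _ _ φ.comm3 g.comm3
  comm4 := LinearEquiv.symm_conjRingEquiv_comm _ _ φ.comm4 g.comm4

theorem D4HatRepEnd.R_eq_zero_or_eq_one {n : ℕ} (hn : 0 < n) {lam : ℂ}
    (g : D4HatRepEnd (R n lam)) (hg : IsIdempotentElem g.g1) : g = 0 ∨ g = 1 := by
  obtain ⟨h₂, h₃, h₄, h₅, hJ⟩ :=
    Module.End.eq_prodMap_and_commute_of_intertwines (J := jordan n lam)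
    g.comm1 g.comm2 g.comm3 g.comm4
  have hN := hJ.sub_right ((Commute.one_right _).smul_right lam)
  rcases hg.eq_zero_or_eq_one_of_commute_of_isNilpotent (isNilpotent_jordan_sub_smul n lam) hN
    (ker_jordan_sub_smul_le_span hn lam) with h | h
  · left
    ext1 <;> simp only [h₂, h₃, h₄, h₅, h] <;> rfl
  · right
    ext1 <;> simp only [h₂, h₃, h₄, h₅, h] <;> rfl

namespace D4HatRepIso

variable {M N P : D4HatRep} (φ : D4HatRepIso M (N.sum P))

theorem isZero_left_of_pullback_projFst_eq_zero
    (h : φ.pullback (D4HatRepEnd.projFst N P) = 0) : N.IsZero :=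
  ⟨φ.e1.subsingleton_fst_of_symm_conjRingEquiv_eq_zero (congrArg D4HatRepEnd.g1 h),
    φ.e2.subsingleton_fst_of_symm_conjRingEquiv_eq_zero (congrArg D4HatRepEnd.g2 h),
    φ.e3.subsingleton_fst_of_symm_conjRingEquiv_eq_zero (congrArg D4HatRepEnd.g3 h),
    φ.e4.subsingleton_fst_of_symm_conjRingEquiv_eq_zero (congrArg D4HatRepEnd.g4 h),
    φ.e5.subsingleton_fst_of_symm_conjRingEquiv_eq_zero (congrArg D4HatRepEnd.g5 h)⟩

theorem isZero_right_of_pullback_projFst_eq_one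
    (h : φ.pullback (D4HatRepEnd.projFst N P) = 1) : P.IsZero :=
  ⟨φ.e1.subsingleton_snd_of_symm_conjRingEquiv_eq_one (congrArg D4HatRepEnd.g1 h),
    φ.e2.subsingleton_snd_of_symm_conjRingEquiv_eq_one (congrArg D4HatRepEnd.g2 h),
    φ.e3.subsingleton_snd_of_symm_conjRingEquiv_eq_one (congrArg D4HatRepEnd.g3 h),
    φ.e4.subsingleton_snd_of_symm_conjRingEquiv_eq_one (congrArg D4HatRepEnd.g4 h),
    φ.e5.subsingleton_snd_of_symm_conjRingEquiv_eq_one (congrArg D4HatRepEnd.g5 h)⟩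

end D4HatRepIso

/-- For each `n > 0` and `λ ∈ ℂ`, the representation `R_n(λ)` of `D̂₄` is
indecomposable. -/
theorem R_indecomposable (n : ℕ) (hn : 0 < n) (lam : ℂ) :
    (R n lam).Indecomposable := by
  refine ⟨fun hzero => ?_, fun N P ⟨φ⟩ => ?_⟩
  · have : Nonempty (Fin n) := ⟨⟨0, hn⟩⟩
    exact not_subsingleton (Fin n → ℂ) hzero.1
  · have hidem : IsIdempotentElem (φ.pullback (D4HatRepEnd.projFst N P)).g1 :=
      LinearMap.isIdempotentElem_prodMap_id_zero.map _
    rcases (φ.pullback _).R_eq_zero_or_eq_one hn hidem with h | h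
    · exact Or.inl (φ.isZero_left_of_pullback_projFst_eq_zero h)
    · exact Or.inr (φ.isZero_right_of_pullback_projFst_eq_one h)
end

section
/- For $n > 0$ and $\lambda \neq \mu$ in $\mathbb{C}$, the representations $R_n(\lambda)$ and $R_n(\mu)$ of the quiver $\hat{D}_4$ are not isomorphic. -/
/-!
At the sink, an isomorphism `R_n(λ) ≅ R_m(μ)` is determined by its components at vertices `1` and
`2`, since the first two structure maps embed the two summands of `ℂⁿ × ℂⁿ`. The third map forces
these two components to agree, and the fourth then says that this common component conjugates
`J_n(λ)` to `J_m(μ)`. Conjugate endomorphisms have equal traces, and `tr J_n(λ) = n λ`.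
-/

theorem LinearEquiv.conj_eq_of_map_graph {K V W : Type*} [CommSemiring K] [AddCommMonoid V]
    [AddCommMonoid W] [Module K V] [Module K W] {A : Module.End K V} {B : Module.End K W}
    (e : V × V →+ W × W) (e₁ : V ≃ₗ[K] W) (e₂ e₃ e₄ : V → W)
    (h₁ : ∀ v, e (v, 0) = (e₁ v, 0)) (h₂ : ∀ v, e (0, v) = (0, e₂ v))
    (h₃ : ∀ v, e (v, v) = (e₃ v, e₃ v)) (h₄ : ∀ v, e (v, A v) = (e₄ v, B (e₄ v))) :
    e₁.conj A = B := by
  have he : ∀ a b, e (a, b) = (e₁ a, e₂ b) := fun a b => by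
    rw [← add_zero a, ← zero_add b, ← Prod.mk_add_mk, map_add, h₁, h₂]
    simp
  have h₁₂ : ∀ v, e₁ v = e₂ v := fun v => by
    have := h₃ v
    rw [he, Prod.mk.injEq] at this
    rw [this.1, this.2]
  have hA : ∀ v, e₁ (A v) = B (e₁ v) := fun v => by
    have := h₄ v
    rw [he, Prod.mk.injEq] at this
    rw [h₁₂, this.2, this.1]
  ext1 w
  rw [LinearEquiv.conj_apply_apply, hA, LinearEquiv.apply_symm_apply]

theorem trace_jordan (n : ℕ) (lam : ℂ) : LinearMap.trace ℂ _ (jordan n lam) = n * lam := by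
  rw [jordan, LinearMap.trace_eq_matrix_trace ℂ (Pi.basisFun ℂ (Fin n)),
    LinearMap.toMatrix_eq_toMatrix', LinearMap.toMatrix'_toLin']
  simp [Matrix.trace, Matrix.diag, mul_comm]

theorem D4HatRepIso.exists_conj_jordan_eq {n m : ℕ} {lam mu : ℂ}
    (iso : D4HatRepIso (R n lam) (R m mu)) :
    ∃ E : (Fin n → ℂ) ≃ₗ[ℂ] (Fin m → ℂ), E.conj (jordan n lam) = jordan m mu :=
  ⟨iso.e1, LinearEquiv.conj_eq_of_map_graph iso.e5.toAddMonoidHom iso.e1 iso.e2 iso.e3 iso.e4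
    iso.comm1 iso.comm2 iso.comm3 iso.comm4⟩

/-- For `n > 0` and `λ ≠ μ` in `ℂ`, the representations `R_n(λ)` and `R_n(μ)` of `D̂₄`
are not isomorphic. -/
theorem R_not_iso_of_ne (n : ℕ) (hn : 0 < n) (lam mu : ℂ) (h : lam ≠ mu) :
    IsEmpty (D4HatRepIso (R n lam) (R n mu)) := by
  refine ⟨fun iso => h ?_⟩
  obtain ⟨E, hE⟩ := iso.exists_conj_jordan_eq
  have htrace := congrArg (LinearMap.trace ℂ _) hE
  rw [LinearMap.trace_conj', trace_jordan, trace_jordan] at htrace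
  exact mul_left_cancel₀ (Nat.cast_ne_zero.mpr hn.ne') htrace
end
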